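/- Under these hypotheses, assume moreover that U₀ is convex, let K ⊂ U₀ be compact, and fix C₁ > 0 and α ∈ (0,λ). Then there is a constant C′, depending only on m, C₀, C₁, λ and α, with the following property: for every x₀ ∈ K and every ε > 0 such that C₁ ε^α ≤ 1/2 and every γ ∈ 𝒳(x₀,C₁,α,ε) takes values in U for t ∈ (0,ε], one has d(Tγ, Tγ̃) ≤ C′ ε^λ d(γ, γ̃) for all γ, γ̃ ∈ 𝒳(x₀,C₁,α,ε). In particular, T is a contraction of (𝒳(x₀,C₁,α,ε), d) when ε is sufficiently small. -/

import Mathlib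

/-!
For `γ, γ' ∈ 𝒳` the condition `C₁ ε^α ≤ 1/2` keeps the height `y` of both curves, and of every
curve on the segment between them (`𝒳` is convex), in `[τ/2, 3τ/2]` at time `τ`. The mean value
theorem along that segment then gives, with `d = d(γ, γ')`,
`|A(γ τ) - A(γ' τ)| ≲ d τ^{α+λ-1}` and `|B(γ τ) - B(γ' τ)| ≲ d τ^{α+λ}`: the horizontal gap
`d τ^α` meets `∂ₓ A ~ τ^{λ-1}`, `∂ₓ B ~ τ^λ`, and the vertical gap `d τ^{α+1}` meets
`∂_y A ~ τ^{λ-2}`, `∂_y B ~ τ^{λ-1}` (the weight `y` in the hypotheses on `y ∂_y` costs one power).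
Integrating from `0` to `t` gains a power `t^{α+λ} ≤ ε^λ t^α`, resp. `t^{α+λ+1} ≤ ε^λ t^{α+1}`.
-/

open Set MeasureTheory

noncomputable section

/-- Membership in the space `𝒳(x₀,C₁,α,ε)` of continuous curves
`γ(t) = (x₀ + a(t), t + b(t))` on `[0,ε]` with `|a(t)| ≤ C₁ t^α` and
`|b(t)| ≤ C₁ t^{α+1}`. -/
def InX {m : ℕ} (x₀ : EuclideanSpace ℝ (Fin m)) (C₁ α ε : ℝ)
    (γ : ℝ → EuclideanSpace ℝ (Fin m) × ℝ) : Prop :=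
  ContinuousOn γ (Icc 0 ε) ∧
    ∀ t ∈ Icc (0:ℝ) ε, ‖(γ t).1 - x₀‖ ≤ C₁ * t ^ α ∧ |(γ t).2 - t| ≤ C₁ * t ^ (α + 1)

/-- The Picard-type map `T` associated to the vector field `(A, 1 + B)`:
`(Tγ)(t) = (x₀ + ∫₀ᵗ A(γ(τ)) dτ, t + ∫₀ᵗ B(γ(τ)) dτ)`. -/
noncomputable def Tmap {m : ℕ}
    (A : EuclideanSpace ℝ (Fin m) × ℝ → EuclideanSpace ℝ (Fin m))
    (B : EuclideanSpace ℝ (Fin m) × ℝ → ℝ)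
    (x₀ : EuclideanSpace ℝ (Fin m)) (γ : ℝ → EuclideanSpace ℝ (Fin m) × ℝ) :
    ℝ → EuclideanSpace ℝ (Fin m) × ℝ :=
  fun t => (x₀ + ∫ τ in (0:ℝ)..t, A (γ τ), t + ∫ τ in (0:ℝ)..t, B (γ τ))

/-- The distance `d(γ,γ̃) = sup_{t ∈ (0,ε]} ( t^{−α}|a(t)−ã(t)| + t^{−α−1}|b(t)−b̃(t)| )`
on `𝒳(x₀,C₁,α,ε)`. -/
noncomputable def dX {m : ℕ} (α ε : ℝ)
    (γ γ' : ℝ → EuclideanSpace ℝ (Fin m) × ℝ) : ℝ :=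
  ⨆ t : Icc (0:ℝ) ε, ((t : ℝ) ^ (-α) * ‖(γ t).1 - (γ' t).1‖ +
    (t : ℝ) ^ (-(α + 1)) * |(γ t).2 - (γ' t).2|)

section EuclideanCoordinates

variable {ι : Type*} [Fintype ι]

lemma norm_le_card_mul_of_forall_abs_apply_le {v : EuclideanSpace ℝ ι} {c : ℝ}
    (h : ∀ i, |v i| ≤ c) : ‖v‖ ≤ Fintype.card ι * c := by
  let b := EuclideanSpace.basisFun ι ℝ
  calc ‖v‖ = ‖∑ i, v i • b i‖ := congrArg norm (b.sum_repr v).symm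
    _ ≤ ∑ i, ‖v i • b i‖ := norm_sum_le _ _
    _ = ∑ i, |v i| := by simp [norm_smul, b.norm_eq_one]
    _ ≤ ∑ _i : ι, c := Finset.sum_le_sum fun i _ => h i
    _ = Fintype.card ι * c := by simp

lemma abs_apply_le_of_abs_apply_single_le [DecidableEq ι] (L : EuclideanSpace ℝ ι × ℝ →L[ℝ] ℝ)
    (u : EuclideanSpace ℝ ι) (s : ℝ) {cx cy : ℝ}
    (hx : ∀ j, |L (EuclideanSpace.single j 1, 0)| ≤ cx) (hy : |L (0, 1)| ≤ cy) :
    |L (u, s)| ≤ Fintype.card ι * ‖u‖ * cx + |s| * cy := by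
  have hu : u = ∑ j, u j • EuclideanSpace.single j 1 := by
    simpa using ((EuclideanSpace.basisFun ι ℝ).sum_repr u).symm
  have hsplit : L (u, s) = ∑ j, u j * L (EuclideanSpace.single j 1, 0) + s * L (0, 1) := by
    have hus : (u, s) = (u, 0) + s • ((0 : EuclideanSpace ℝ ι), (1 : ℝ)) := by simp
    have hu0 : L (u, 0) = (L.comp (ContinuousLinearMap.inl ℝ _ ℝ)) u := rfl
    rw [hus, map_add, map_smul, smul_eq_mul, hu0]
    nth_rw 1 [hu]
    simp [map_sum]
  have hfirst : |∑ j, u j * L (EuclideanSpace.single j 1, 0)| ≤ Fintype.card ι * ‖u‖ * cx :=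
    calc |∑ j, u j * L (EuclideanSpace.single j 1, 0)|
        ≤ ∑ j, |u j| * |L (EuclideanSpace.single j 1, 0)| := by
          simpa only [abs_mul] using Finset.abs_sum_le_sum_abs
            (fun j => u j * L (EuclideanSpace.single j 1, 0)) Finset.univ
      _ ≤ ∑ _j : ι, ‖u‖ * cx := Finset.sum_le_sum fun j _ =>
          mul_le_mul (PiLp.norm_apply_le u j) (hx j) (abs_nonneg _) (norm_nonneg _)
      _ = Fintype.card ι * ‖u‖ * cx := by simp [mul_assoc]
  rw [hsplit]
  refine (abs_add_le _ _).trans (add_le_add hfirst ?_)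
  rw [abs_mul]
  exact mul_le_mul_of_nonneg_left hy (abs_nonneg s)

end EuclideanCoordinates

lemma rpow_le_four_mul_rpow {τ y c : ℝ} (hτ : 0 < τ) (hy : y ∈ Icc (τ / 2) (3 * τ / 2))
    (hc : c ∈ Icc (-2) 1) : y ^ c ≤ 4 * τ ^ c := by
  have hτc : 0 < τ ^ c := Real.rpow_pos_of_pos hτ c
  rcases le_total c 0 with hc0 | hc0
  · calc y ^ c ≤ (2⁻¹ * τ) ^ c :=
          Real.rpow_le_rpow_of_nonpos (by positivity) (by linarith [hy.1]) hc0
      _ = (2⁻¹ : ℝ) ^ c * τ ^ c := Real.mul_rpow (by norm_num) hτ.le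
      _ ≤ (2⁻¹ : ℝ) ^ (-2 : ℝ) * τ ^ c := mul_le_mul_of_nonneg_right
          (Real.rpow_le_rpow_of_exponent_ge (by norm_num) (by norm_num) hc.1) hτc.le
      _ = 4 * τ ^ c := by norm_num [Real.rpow_neg, Real.inv_rpow]
  · calc y ^ c ≤ (3 / 2 * τ) ^ c :=
          Real.rpow_le_rpow (by linarith [hy.1]) (by linarith [hy.2]) hc0
      _ = (3 / 2 : ℝ) ^ c * τ ^ c := Real.mul_rpow (by norm_num) hτ.le
      _ ≤ (3 / 2 : ℝ) ^ (1 : ℝ) * τ ^ c := mul_le_mul_of_nonneg_right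
          (Real.rpow_le_rpow_of_exponent_le (by norm_num) hc.2) hτc.le
      _ ≤ 4 * τ ^ c := by rw [Real.rpow_one]; gcongr; norm_num

lemma norm_sub_le_of_norm_fderiv_segment_le {E F : Type*} [NormedAddCommGroup E]
    [NormedSpace ℝ E] [NormedAddCommGroup F] [NormedSpace ℝ F] {f : E → F} {U : Set E}
    (hU : IsOpen U) (hf : DifferentiableOn ℝ f U) {p p' : E}
    (hseg : ∀ θ ∈ Icc (0 : ℝ) 1, p' + θ • (p - p') ∈ U) {C : ℝ}
    (hC : ∀ θ ∈ Icc (0 : ℝ) 1, ‖fderiv ℝ f (p' + θ • (p - p')) (p - p')‖ ≤ C) :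
    ‖f p - f p'‖ ≤ C := by
  have hderiv : ∀ θ ∈ Icc (0 : ℝ) 1, HasDerivWithinAt (fun θ : ℝ => f (p' + θ • (p - p')))
      (fderiv ℝ f (p' + θ • (p - p')) (p - p')) (Icc 0 1) θ := fun θ hθ => by
    have hline : HasDerivAt (fun θ : ℝ => p' + θ • (p - p')) (p - p') θ := by
      simpa using ((hasDerivAt_id θ).smul_const (p - p')).const_add p'
    exact ((hf.differentiableAt (hU.mem_nhds (hseg θ hθ))).hasFDerivAt.comp_hasDerivAt θ
      hline).hasDerivWithinAt
  simpa using norm_image_sub_le_of_norm_deriv_le_segment_01' hderiv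
    fun θ hθ => hC θ (Ico_subset_Icc_self hθ)

lemma abs_sub_le_of_weighted_fderiv_le {ι : Type*} [Fintype ι] [DecidableEq ι]
    {f : EuclideanSpace ℝ ι × ℝ → ℝ} {U : Set (EuclideanSpace ℝ ι × ℝ)} (hU : IsOpen U)
    (hf : DifferentiableOn ℝ f U) {C κ : ℝ} (hC : 0 ≤ C) (hκ : κ ∈ Icc (-1) 1)
    (hfx : ∀ q ∈ U, ∀ j, |fderiv ℝ f q (EuclideanSpace.single j 1, 0)| ≤ C * q.2 ^ κ)
    (hfy : ∀ q ∈ U, |q.2 * fderiv ℝ f q (0, 1)| ≤ C * q.2 ^ κ)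
    {p p' : EuclideanSpace ℝ ι × ℝ} (hseg : ∀ θ ∈ Icc (0 : ℝ) 1, p' + θ • (p - p') ∈ U)
    {τ α d : ℝ} (hτ : 0 < τ) (hp : p.2 ∈ Icc (τ / 2) (3 * τ / 2))
    (hp' : p'.2 ∈ Icc (τ / 2) (3 * τ / 2))
    (hdx : ‖p.1 - p'.1‖ ≤ d * τ ^ α) (hdy : |p.2 - p'.2| ≤ d * τ ^ (α + 1)) :
    |f p - f p'| ≤ 4 * (Fintype.card ι + 1) * C * d * τ ^ (α + κ) := by
  rw [← Real.norm_eq_abs]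
  refine norm_sub_le_of_norm_fderiv_segment_le hU hf hseg fun θ hθ => ?_
  set q := p' + θ • (p - p')
  have hq : q.2 ∈ Icc (τ / 2) (3 * τ / 2) := by
    simpa [q] using (convex_Icc _ _).add_smul_sub_mem hp' hp hθ
  have hq0 : 0 < q.2 := by linarith [hq.1]
  have hLx : ∀ j, |fderiv ℝ f q (EuclideanSpace.single j 1, 0)| ≤ C * (4 * τ ^ κ) := fun j =>
    (hfx q (hseg θ hθ) j).trans <| mul_le_mul_of_nonneg_left
      (rpow_le_four_mul_rpow hτ hq ⟨by linarith [hκ.1], hκ.2⟩) hC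
  have hLy : |fderiv ℝ f q (0, 1)| ≤ C * (4 * τ ^ (κ - 1)) := by
    have h := hfy q (hseg θ hθ)
    rw [abs_mul, abs_of_pos hq0, ← le_div_iff₀' hq0, mul_div_assoc,
      ← Real.rpow_sub_one hq0.ne'] at h
    exact h.trans <| mul_le_mul_of_nonneg_left
      (rpow_le_four_mul_rpow hτ hq ⟨by linarith [hκ.1], by linarith [hκ.2]⟩) hC
  have hτκ : 0 ≤ τ ^ κ := Real.rpow_nonneg hτ.le κ
  have hτκ' : 0 ≤ τ ^ (κ - 1) := Real.rpow_nonneg hτ.le _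
  calc ‖fderiv ℝ f q (p - p')‖ = |fderiv ℝ f q ((p - p').1, (p - p').2)| := Real.norm_eq_abs _
    _ ≤ Fintype.card ι * ‖(p - p').1‖ * (C * (4 * τ ^ κ))
        + |(p - p').2| * (C * (4 * τ ^ (κ - 1))) :=
      abs_apply_le_of_abs_apply_single_le _ _ _ hLx hLy
    _ ≤ Fintype.card ι * (d * τ ^ α) * (C * (4 * τ ^ κ))
        + d * τ ^ (α + 1) * (C * (4 * τ ^ (κ - 1))) := by
      rw [Prod.fst_sub, Prod.snd_sub]
      gcongr
    _ = 4 * (Fintype.card ι + 1) * C * d * τ ^ (α + κ) := by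
      rw [Real.rpow_add hτ, Real.rpow_add hτ, Real.rpow_sub_one hτ.ne', Real.rpow_one]
      field_simp

section PowerWeightedIntegrals

variable {E : Type*} [NormedAddCommGroup E] {g : ℝ → E} {t : ℝ}

lemma intervalIntegrable_of_continuousOn_of_norm_le_mul_rpow {c β : ℝ} (ht : 0 ≤ t)
    (hβ : -1 < β) (hg : ContinuousOn g (Ioc 0 t)) (hbound : ∀ τ ∈ Ioc 0 t, ‖g τ‖ ≤ c * τ ^ β) :
    IntervalIntegrable g volume 0 t := by
  refine ((intervalIntegral.intervalIntegrable_rpow' hβ).const_mul c).mono_fun ?_ ?_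
  · rw [uIoc_of_le ht]
    exact hg.aestronglyMeasurable measurableSet_Ioc
  · rw [uIoc_of_le ht]
    refine (ae_restrict_iff' measurableSet_Ioc).2 (Filter.Eventually.of_forall fun τ hτ => ?_)
    exact (hbound τ hτ).trans (le_abs_self _)

lemma norm_integral_le_mul_rpow_of_norm_le [NormedSpace ℝ E] {c κ μ ε : ℝ} (hc : 0 ≤ c)
    (hκ : 0 ≤ κ) (hμ : 0 < μ) (ht : 0 ≤ t) (htε : t ≤ ε)
    (hg : ∀ τ ∈ Ioc 0 t, ‖g τ‖ ≤ c * τ ^ (κ + (μ - 1))) :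
    ‖∫ τ in (0 : ℝ)..t, g τ‖ ≤ c / μ * ε ^ μ * t ^ κ := by
  have hκμ : 0 < κ + μ := by linarith
  calc ‖∫ τ in (0 : ℝ)..t, g τ‖ ≤ ∫ τ in (0 : ℝ)..t, c * τ ^ (κ + (μ - 1)) :=
        intervalIntegral.norm_integral_le_of_norm_le ht (Filter.Eventually.of_forall hg)
          ((intervalIntegral.intervalIntegrable_rpow' (by linarith)).const_mul c)
    _ = c / (κ + μ) * t ^ μ * t ^ κ := by
      rw [intervalIntegral.integral_const_mul, integral_rpow (Or.inl (by linarith)),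
        show κ + (μ - 1) + 1 = κ + μ by ring, Real.zero_rpow hκμ.ne', sub_zero,
        Real.rpow_add' ht hκμ.ne']
      ring
    _ ≤ c / μ * ε ^ μ * t ^ κ := by
      gcongr
      linarith

end PowerWeightedIntegrals

section WeightedDistance

variable {m : ℕ} {α ε : ℝ} {γ γ' : ℝ → EuclideanSpace ℝ (Fin m) × ℝ}

def weightedGap (α : ℝ) (γ γ' : ℝ → EuclideanSpace ℝ (Fin m) × ℝ) (t : ℝ) : ℝ :=
  t ^ (-α) * ‖(γ t).1 - (γ' t).1‖ + t ^ (-(α + 1)) * |(γ t).2 - (γ' t).2|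

lemma weightedGap_nonneg {t : ℝ} (ht : 0 ≤ t) : 0 ≤ weightedGap α γ γ' t := by
  unfold weightedGap
  positivity

lemma dX_nonneg : 0 ≤ dX α ε γ γ' :=
  Real.iSup_nonneg fun t => weightedGap_nonneg (γ := γ) (γ' := γ') t.2.1

lemma weightedGap_le {a b t : ℝ} (hα : 0 < α) (ht : 0 ≤ t) (ha : 0 ≤ a) (hb : 0 ≤ b)
    (h : 0 < t → ‖(γ t).1 - (γ' t).1‖ ≤ a * t ^ α ∧ |(γ t).2 - (γ' t).2| ≤ b * t ^ (α + 1)) :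
    weightedGap α γ γ' t ≤ a + b := by
  rcases ht.eq_or_lt with rfl | ht
  · rw [weightedGap, Real.zero_rpow (neg_ne_zero.2 hα.ne'),
      Real.zero_rpow (neg_ne_zero.2 (by linarith)), zero_mul, zero_mul, add_zero]
    exact add_nonneg ha hb
  · obtain ⟨h1, h2⟩ := h ht
    unfold weightedGap
    rw [Real.rpow_neg ht.le, Real.rpow_neg ht.le]
    exact add_le_add
      ((inv_mul_le_iff₀ (Real.rpow_pos_of_pos ht _)).2 (h1.trans_eq (mul_comm _ _)))
      ((inv_mul_le_iff₀ (Real.rpow_pos_of_pos ht _)).2 (h2.trans_eq (mul_comm _ _)))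

lemma le_dX (hbdd : BddAbove (range fun t : Icc (0 : ℝ) ε => weightedGap α γ γ' t)) {t : ℝ}
    (ht : t ∈ Ioc 0 ε) :
    ‖(γ t).1 - (γ' t).1‖ ≤ dX α ε γ γ' * t ^ α ∧
      |(γ t).2 - (γ' t).2| ≤ dX α ε γ γ' * t ^ (α + 1) := by
  have h : weightedGap α γ γ' t ≤ dX α ε γ γ' := le_ciSup hbdd ⟨t, ht.1.le, ht.2⟩
  have h1 := Real.rpow_nonneg ht.1.le (-α)
  have h2 := Real.rpow_nonneg ht.1.le (-(α + 1))
  unfold weightedGap at h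
  simp only [Real.rpow_neg ht.1.le] at h h1 h2
  constructor
  · rw [mul_comm, ← inv_mul_le_iff₀ (Real.rpow_pos_of_pos ht.1 _)]
    nlinarith [abs_nonneg ((γ t).2 - (γ' t).2)]
  · rw [mul_comm, ← inv_mul_le_iff₀ (Real.rpow_pos_of_pos ht.1 _)]
    nlinarith [norm_nonneg ((γ t).1 - (γ' t).1)]

lemma dX_le_of_forall_le {a b : ℝ} (hα : 0 < α) (hε : 0 ≤ ε) (ha : 0 ≤ a) (hb : 0 ≤ b)
    (h : ∀ t ∈ Ioc 0 ε,
      ‖(γ t).1 - (γ' t).1‖ ≤ a * t ^ α ∧ |(γ t).2 - (γ' t).2| ≤ b * t ^ (α + 1)) :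
    dX α ε γ γ' ≤ a + b :=
  have : Nonempty (Icc (0 : ℝ) ε) := ⟨⟨0, le_rfl, hε⟩⟩
  ciSup_le fun t => weightedGap_le hα t.2.1 ha hb fun ht => h t ⟨ht, t.2.2⟩

end WeightedDistance

namespace InX

variable {m : ℕ} {x₀ : EuclideanSpace ℝ (Fin m)} {C₁ α ε : ℝ}
  {γ γ' : ℝ → EuclideanSpace ℝ (Fin m) × ℝ} {U : Set (EuclideanSpace ℝ (Fin m) × ℝ)}

lemma convex_setOf : Convex ℝ {γ | InX x₀ C₁ α ε γ} := by
  intro γ hγ γ' hγ' a b ha hb hab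
  refine ⟨(hγ.1.const_smul a).add (hγ'.1.const_smul b), fun t ht => ?_⟩
  have h1 := convex_closedBall x₀ (C₁ * t ^ α) (mem_closedBall_iff_norm.2 (hγ.2 t ht).1)
    (mem_closedBall_iff_norm.2 (hγ'.2 t ht).1) ha hb hab
  have h2 := convex_closedBall t (C₁ * t ^ (α + 1)) (mem_closedBall_iff_norm.2 (hγ.2 t ht).2)
    (mem_closedBall_iff_norm.2 (hγ'.2 t ht).2) ha hb hab
  exact ⟨mem_closedBall_iff_norm.1 h1, mem_closedBall_iff_norm.1 h2⟩

lemma norm_sub_le (hγ : InX x₀ C₁ α ε γ) (hγ' : InX x₀ C₁ α ε γ') {t : ℝ} (ht : t ∈ Icc 0 ε) :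
    ‖(γ t).1 - (γ' t).1‖ ≤ 2 * C₁ * t ^ α ∧ |(γ t).2 - (γ' t).2| ≤ 2 * C₁ * t ^ (α + 1) := by
  obtain ⟨h1, h2⟩ := hγ.2 t ht
  obtain ⟨h1', h2'⟩ := hγ'.2 t ht
  constructor
  · linarith [norm_sub_le_norm_sub_add_norm_sub (γ t).1 x₀ (γ' t).1, norm_sub_rev x₀ (γ' t).1]
  · linarith [abs_sub_le (γ t).2 t (γ' t).2, abs_sub_comm t (γ' t).2]

lemma bddAbove_weightedGap (hγ : InX x₀ C₁ α ε γ) (hγ' : InX x₀ C₁ α ε γ') (hC₁ : 0 ≤ C₁)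
    (hα : 0 < α) : BddAbove (range fun t : Icc (0 : ℝ) ε => weightedGap α γ γ' t) := by
  refine ⟨2 * C₁ + 2 * C₁, ?_⟩
  rintro _ ⟨t, rfl⟩
  exact weightedGap_le hα t.2.1 (by positivity) (by positivity) fun _ => hγ.norm_sub_le hγ' t.2

lemma snd_mem_Icc (hγ : InX x₀ C₁ α ε γ) (hC₁ : 0 ≤ C₁) (hα : 0 ≤ α)
    (hhalf : C₁ * ε ^ α ≤ 1 / 2) {t : ℝ} (ht : t ∈ Ioc 0 ε) :
    (γ t).2 ∈ Icc (t / 2) (3 * t / 2) := by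
  have hsmall : C₁ * t ^ (α + 1) ≤ t / 2 :=
    calc C₁ * t ^ (α + 1) = C₁ * t ^ α * t := by rw [Real.rpow_add_one ht.1.ne', mul_assoc]
      _ ≤ 1 / 2 * t := mul_le_mul_of_nonneg_right
        ((mul_le_mul_of_nonneg_left (Real.rpow_le_rpow ht.1.le ht.2 hα) hC₁).trans hhalf) ht.1.le
      _ = t / 2 := by ring
  have h := abs_le.1 (hγ.2 t ⟨ht.1.le, ht.2⟩).2
  constructor <;> linarith [h.1, h.2]


lemma intervalIntegrable_comp {F : Type*} [NormedAddCommGroup F]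
    {f : EuclideanSpace ℝ (Fin m) × ℝ → F} (hf : ContinuousOn f U) {C κ : ℝ} (hC : 0 ≤ C)
    (hκ : κ ∈ Ioc (-1) 1) (hbound : ∀ q ∈ U, ‖f q‖ ≤ C * q.2 ^ κ) (hγ : InX x₀ C₁ α ε γ)
    (hC₁ : 0 ≤ C₁) (hα : 0 ≤ α) (hhalf : C₁ * ε ^ α ≤ 1 / 2) (hγU : ∀ t ∈ Ioc 0 ε, γ t ∈ U)
    {t : ℝ} (ht : t ∈ Ioc 0 ε) : IntervalIntegrable (fun τ => f (γ τ)) volume 0 t := by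
  have hsub : Ioc 0 t ⊆ Ioc 0 ε := Ioc_subset_Ioc_right ht.2
  refine intervalIntegrable_of_continuousOn_of_norm_le_mul_rpow (c := 4 * C) ht.1.le hκ.1
    (hf.comp (hγ.1.mono fun τ hτ => ⟨hτ.1.le, hτ.2.trans ht.2⟩) fun τ hτ => hγU τ (hsub hτ))
    fun τ hτ => ?_
  calc ‖f (γ τ)‖ ≤ C * (γ τ).2 ^ κ := hbound _ (hγU τ (hsub hτ))
    _ ≤ C * (4 * τ ^ κ) := mul_le_mul_of_nonneg_left (rpow_le_four_mul_rpow hτ.1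
        (hγ.snd_mem_Icc hC₁ hα hhalf (hsub hτ)) ⟨by linarith [hκ.1], hκ.2⟩) hC
    _ = 4 * C * τ ^ κ := by ring

lemma abs_sub_le_of_weighted_fderiv_le {f : EuclideanSpace ℝ (Fin m) × ℝ → ℝ} (hU : IsOpen U)
    (hf : DifferentiableOn ℝ f U) {C κ : ℝ} (hC : 0 ≤ C) (hκ : κ ∈ Icc (-1) 1)
    (hfx : ∀ q ∈ U, ∀ j, |fderiv ℝ f q (EuclideanSpace.single j 1, 0)| ≤ C * q.2 ^ κ)
    (hfy : ∀ q ∈ U, |q.2 * fderiv ℝ f q (0, 1)| ≤ C * q.2 ^ κ)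
    (hC₁ : 0 ≤ C₁) (hα : 0 < α) (hhalf : C₁ * ε ^ α ≤ 1 / 2)
    (hmem : ∀ γ, InX x₀ C₁ α ε γ → ∀ t ∈ Ioc 0 ε, γ t ∈ U)
    (hγ : InX x₀ C₁ α ε γ) (hγ' : InX x₀ C₁ α ε γ') {τ : ℝ} (hτ : τ ∈ Ioc 0 ε) :
    |f (γ τ) - f (γ' τ)| ≤ 4 * (m + 1) * C * dX α ε γ γ' * τ ^ (α + κ) := by
  have hgap := le_dX (hγ.bddAbove_weightedGap hγ' hC₁ hα) hτ
  simpa using _root_.abs_sub_le_of_weighted_fderiv_le hU hf hC hκ hfx hfy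
    (fun θ hθ => hmem _ (convex_setOf.add_smul_sub_mem hγ' hγ hθ) τ hτ) hτ.1
    (hγ.snd_mem_Icc hC₁ hα.le hhalf hτ) (hγ'.snd_mem_Icc hC₁ hα.le hhalf hτ) hgap.1 hgap.2

lemma norm_sub_le_of_weighted_fderiv_apply_le {ι : Type*} [Fintype ι]
    {f : EuclideanSpace ℝ (Fin m) × ℝ → EuclideanSpace ℝ ι} (hU : IsOpen U)
    (hf : DifferentiableOn ℝ f U) {C κ : ℝ} (hC : 0 ≤ C) (hκ : κ ∈ Icc (-1) 1)
    (hfx : ∀ q ∈ U, ∀ i j,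
      |fderiv ℝ (fun w => f w i) q (EuclideanSpace.single j 1, 0)| ≤ C * q.2 ^ κ)
    (hfy : ∀ q ∈ U, ∀ i, |q.2 * fderiv ℝ (fun w => f w i) q (0, 1)| ≤ C * q.2 ^ κ)
    (hC₁ : 0 ≤ C₁) (hα : 0 < α) (hhalf : C₁ * ε ^ α ≤ 1 / 2)
    (hmem : ∀ γ, InX x₀ C₁ α ε γ → ∀ t ∈ Ioc 0 ε, γ t ∈ U)
    (hγ : InX x₀ C₁ α ε γ) (hγ' : InX x₀ C₁ α ε γ') {τ : ℝ} (hτ : τ ∈ Ioc 0 ε) :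
    ‖f (γ τ) - f (γ' τ)‖ ≤
      Fintype.card ι * (4 * (m + 1) * C * dX α ε γ γ') * τ ^ (α + κ) :=
  (norm_le_card_mul_of_forall_abs_apply_le fun i =>
    hγ.abs_sub_le_of_weighted_fderiv_le hU
      (show DifferentiableOn ℝ (fun w => f w i) U from
        (EuclideanSpace.proj (𝕜 := ℝ) i).differentiable.comp_differentiableOn hf) hC hκ
      (fun q hq => hfx q hq i) (fun q hq => hfy q hq i) hC₁ hα hhalf hmem hγ' hτ).trans_eq
    (mul_assoc _ _ _).symm

end InX

theorem picard_map_contraction_general {m : ℕ}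
    (U₀ : Set (EuclideanSpace ℝ (Fin m))) (hU₀ : IsOpen U₀) (ε₀ : ℝ)
    (A : EuclideanSpace ℝ (Fin m) × ℝ → EuclideanSpace ℝ (Fin m))
    (B : EuclideanSpace ℝ (Fin m) × ℝ → ℝ)
    (hV : ContDiffOn ℝ 1 (fun q => (A q, 1 + B q)) (U₀ ×ˢ Ioo 0 ε₀))
    (C₀ : ℝ) (hC₀ : 0 < C₀) (lam : ℝ) (hlam : lam ∈ Ioo (0 : ℝ) 1)
    (hB : ∀ q ∈ U₀ ×ˢ Ioo (0:ℝ) ε₀, |B q| ≤ C₀ * q.2 ^ lam)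
    (hBx : ∀ q ∈ U₀ ×ˢ Ioo (0:ℝ) ε₀, ∀ j : Fin m,
      |fderiv ℝ B q (EuclideanSpace.single j 1, 0)| ≤ C₀ * q.2 ^ lam)
    (hBy : ∀ q ∈ U₀ ×ˢ Ioo (0:ℝ) ε₀,
      |q.2 * fderiv ℝ B q (0, 1)| ≤ C₀ * q.2 ^ lam)
    (hA : ∀ q ∈ U₀ ×ˢ Ioo (0:ℝ) ε₀, ∀ i : Fin m,
      |A q i| ≤ C₀ * q.2 ^ (lam - 1))
    (hAx : ∀ q ∈ U₀ ×ˢ Ioo (0:ℝ) ε₀, ∀ i j : Fin m,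
      |fderiv ℝ (fun w => A w i) q (EuclideanSpace.single j 1, 0)| ≤ C₀ * q.2 ^ (lam - 1))
    (hAy : ∀ q ∈ U₀ ×ˢ Ioo (0:ℝ) ε₀, ∀ i : Fin m,
      |q.2 * fderiv ℝ (fun w => A w i) q (0, 1)| ≤ C₀ * q.2 ^ (lam - 1))
    (K : Set (EuclideanSpace ℝ (Fin m)))
    (C₁ : ℝ) (hC₁ : 0 < C₁) (α : ℝ) (hα : α ∈ Ioo (0 : ℝ) lam) :
    ∃ C' : ℝ, 0 < C' ∧ ∀ x₀ ∈ K, ∀ ε : ℝ, 0 < ε →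
      C₁ * ε ^ α ≤ 1 / 2 →
      (∀ γ : ℝ → EuclideanSpace ℝ (Fin m) × ℝ, InX x₀ C₁ α ε γ →
        ∀ t ∈ Ioc (0:ℝ) ε, γ t ∈ U₀ ×ˢ Ioo (0:ℝ) ε₀) →
      ∀ γ γ' : ℝ → EuclideanSpace ℝ (Fin m) × ℝ,
        InX x₀ C₁ α ε γ → InX x₀ C₁ α ε γ' →
        dX α ε (Tmap A B x₀ γ) (Tmap A B x₀ γ') ≤ C' * ε ^ lam * dX α ε γ γ' := by
  obtain ⟨hlam0, hlam1⟩ := hlam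
  have hα0 : 0 < α := hα.1
  have hUo : IsOpen (U₀ ×ˢ Ioo (0 : ℝ) ε₀) := hU₀.prod isOpen_Ioo
  have hVd := hV.differentiableOn one_ne_zero
  have hAd : DifferentiableOn ℝ A (U₀ ×ˢ Ioo (0 : ℝ) ε₀) := hVd.fst
  have hBd : DifferentiableOn ℝ B (U₀ ×ˢ Ioo (0 : ℝ) ε₀) := by
    simpa using hVd.snd.sub_const 1
  have hA_size (q) (hq : q ∈ U₀ ×ˢ Ioo (0 : ℝ) ε₀) : ‖A q‖ ≤ m * C₀ * q.2 ^ (lam - 1) := by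
    simpa [mul_assoc] using norm_le_card_mul_of_forall_abs_apply_le (hA q hq)
  refine ⟨(m + 1) * (4 * (m + 1) * C₀) / lam, by positivity,
    fun x₀ _ ε hε hhalf hmem γ γ' hγ hγ' => ?_⟩
  set d := dX α ε γ γ'
  have hd : 0 ≤ d := dX_nonneg
  have hA_lip (τ) (hτ : τ ∈ Ioc 0 ε) :
      ‖A (γ τ) - A (γ' τ)‖ ≤ m * (4 * (m + 1) * C₀ * d) * τ ^ (α + (lam - 1)) := by
    simpa only [Fintype.card_fin] using hγ.norm_sub_le_of_weighted_fderiv_apply_le hUo hAd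
      hC₀.le ⟨by linarith, by linarith⟩ hAx hAy hC₁.le hα0 hhalf hmem hγ' hτ
  have hB_lip (τ) (hτ : τ ∈ Ioc 0 ε) :
      ‖B (γ τ) - B (γ' τ)‖ ≤ 4 * (m + 1) * C₀ * d * τ ^ ((α + 1) + (lam - 1)) := by
    rw [Real.norm_eq_abs, show α + 1 + (lam - 1) = α + lam by ring]
    exact hγ.abs_sub_le_of_weighted_fderiv_le hUo hBd hC₀.le ⟨by linarith, hlam1.le⟩ hBx hBy
      hC₁.le hα0 hhalf hmem hγ' hτ
  have hA_int {δ} (hδ : InX x₀ C₁ α ε δ) {t} (ht : t ∈ Ioc 0 ε) :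
      IntervalIntegrable (fun τ => A (δ τ)) volume 0 t :=
    hδ.intervalIntegrable_comp hAd.continuousOn (by positivity) ⟨by linarith, by linarith⟩
      hA_size hC₁.le hα0.le hhalf (hmem δ hδ) ht
  have hB_int {δ} (hδ : InX x₀ C₁ α ε δ) {t} (ht : t ∈ Ioc 0 ε) :
      IntervalIntegrable (fun τ => B (δ τ)) volume 0 t :=
    hδ.intervalIntegrable_comp hBd.continuousOn hC₀.le ⟨by linarith, hlam1.le⟩
      (fun q hq => (Real.norm_eq_abs _).trans_le (hB q hq)) hC₁.le hα0.le hhalf (hmem δ hδ) ht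
  refine (dX_le_of_forall_le (a := m * (4 * (m + 1) * C₀ * d) / lam * ε ^ lam)
    (b := 4 * (m + 1) * C₀ * d / lam * ε ^ lam)
    hα0 hε.le (by positivity) (by positivity) fun t ht => ⟨?_, ?_⟩).trans_eq (by ring)
  · rw [Tmap, Tmap, add_sub_add_left_eq_sub,
      ← intervalIntegral.integral_sub (hA_int hγ ht) (hA_int hγ' ht)]
    exact norm_integral_le_mul_rpow_of_norm_le (by positivity) hα0.le hlam0 ht.1.le ht.2
      fun τ hτ => hA_lip τ ⟨hτ.1, hτ.2.trans ht.2⟩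
  · rw [Tmap, Tmap, add_sub_add_left_eq_sub,
      ← intervalIntegral.integral_sub (hB_int hγ ht) (hB_int hγ' ht), ← Real.norm_eq_abs]
    exact norm_integral_le_mul_rpow_of_norm_le (by positivity) (by linarith) hlam0 ht.1.le ht.2
      fun τ hτ => hB_lip τ ⟨hτ.1, hτ.2.trans ht.2⟩

/-- **The Picard map `T` is a contraction.**  Under the hypotheses on the vector field
`(A, 1+B)`, with `U₀` convex, `K ⊂ U₀` compact, `C₁ > 0` and `α ∈ (0,λ)`, there is a
constant `C′ > 0` such that for every `x₀ ∈ K` and every `ε > 0` with `C₁ ε^α ≤ 1/2` for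
which all curves of `𝒳(x₀,C₁,α,ε)` take values in `U` on `(0,ε]`, one has
`d(Tγ, Tγ̃) ≤ C′ ε^λ d(γ, γ̃)` for all `γ, γ̃ ∈ 𝒳(x₀,C₁,α,ε)`. -/
theorem picard_map_contraction {m : ℕ} (hm : 1 ≤ m)
    (U₀ : Set (EuclideanSpace ℝ (Fin m))) (hU₀ : IsOpen U₀)
    (ε₀ : ℝ) (hε₀ : 0 < ε₀)
    (A : EuclideanSpace ℝ (Fin m) × ℝ → EuclideanSpace ℝ (Fin m))
    (B : EuclideanSpace ℝ (Fin m) × ℝ → ℝ)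
    (hV : ContDiffOn ℝ 1 (fun q => (A q, 1 + B q)) (U₀ ×ˢ Ioo 0 ε₀))
    (C₀ : ℝ) (hC₀ : 0 < C₀) (lam : ℝ) (hlam : lam ∈ Ioo (0 : ℝ) 1)
    (hB : ∀ q ∈ U₀ ×ˢ Ioo (0:ℝ) ε₀, |B q| ≤ C₀ * q.2 ^ lam)
    (hBx : ∀ q ∈ U₀ ×ˢ Ioo (0:ℝ) ε₀, ∀ j : Fin m,
      |fderiv ℝ B q (EuclideanSpace.single j 1, 0)| ≤ C₀ * q.2 ^ lam)
    (hBy : ∀ q ∈ U₀ ×ˢ Ioo (0:ℝ) ε₀,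
      |q.2 * fderiv ℝ B q (0, 1)| ≤ C₀ * q.2 ^ lam)
    (hA : ∀ q ∈ U₀ ×ˢ Ioo (0:ℝ) ε₀, ∀ i : Fin m,
      |A q i| ≤ C₀ * q.2 ^ (lam - 1))
    (hAx : ∀ q ∈ U₀ ×ˢ Ioo (0:ℝ) ε₀, ∀ i j : Fin m,
      |fderiv ℝ (fun w => A w i) q (EuclideanSpace.single j 1, 0)| ≤ C₀ * q.2 ^ (lam - 1))
    (hAy : ∀ q ∈ U₀ ×ˢ Ioo (0:ℝ) ε₀, ∀ i : Fin m,
      |q.2 * fderiv ℝ (fun w => A w i) q (0, 1)| ≤ C₀ * q.2 ^ (lam - 1))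
    (hU₀conv : Convex ℝ U₀)
    (K : Set (EuclideanSpace ℝ (Fin m))) (hK : IsCompact K) (hKU : K ⊆ U₀)
    (C₁ : ℝ) (hC₁ : 0 < C₁) (α : ℝ) (hα : α ∈ Ioo (0 : ℝ) lam) :
    ∃ C' : ℝ, 0 < C' ∧ ∀ x₀ ∈ K, ∀ ε : ℝ, 0 < ε →
      C₁ * ε ^ α ≤ 1 / 2 →
      (∀ γ : ℝ → EuclideanSpace ℝ (Fin m) × ℝ, InX x₀ C₁ α ε γ →
        ∀ t ∈ Ioc (0:ℝ) ε, γ t ∈ U₀ ×ˢ Ioo (0:ℝ) ε₀) →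
      ∀ γ γ' : ℝ → EuclideanSpace ℝ (Fin m) × ℝ,
        InX x₀ C₁ α ε γ → InX x₀ C₁ α ε γ' →
        dX α ε (Tmap A B x₀ γ) (Tmap A B x₀ γ') ≤ C' * ε ^ lam * dX α ε γ γ' :=
  picard_map_contraction_general U₀ hU₀ ε₀ A B hV C₀ hC₀ lam hlam hB hBx hBy hA hAx hAy K C₁ hC₁ α
    hα
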